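/- arXiv:1606.00129 — 2 statements merged into one kernel-verified Lean document; each statement's English description precedes it below -/
import Mathlib

section
/- Let X be a geodesic metric space and let ℓ₁, ℓ₂ be two geodesics in X with ℓ₁(0) = ℓ₂(0) = e. Let x₁ be a point on ℓ₁ and x₂ a point on ℓ₂, let P be a geodesic from x₁ to x₂, let z ∈ P be a point at minimal distance from e among points of P, and let γ be any geodesic from z to e. Then the concatenation of the subpath of P from x₁ to z followed by γ, and the concatenation of the subpath of P from x₂ to z followed by γ, are both (3,0)-quasi-geodesics (when parametrized by arc length). Moreover, if ℓ₁ and ℓ₂ are N-Morse for a Morse gauge N, then d(z, ℓ₁) ≤ N(3,0) and d(z, ℓ₂) ≤ N(3,0). -/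
open Set Filter

section Defs

variable {X : Type*} [MetricSpace X]

/-- A geodesic segment of length `L`, parametrized by arc length on `[0, L]`. -/
def IsGeodesicSeg (γ : ℝ → X) (L : ℝ) : Prop :=
  0 ≤ L ∧ ∀ s ∈ Icc (0:ℝ) L, ∀ t ∈ Icc (0:ℝ) L, dist (γ s) (γ t) = |s - t|

/-- A geodesic from `x` to `y`, parametrized by arc length on `[0, dist x y]`. -/
def IsGeodesicFromTo (γ : ℝ → X) (x y : X) : Prop :=
  IsGeodesicSeg γ (dist x y) ∧ γ 0 = x ∧ γ (dist x y) = y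

/-- A geodesic ray, parametrized by arc length on `[0, ∞)`. -/
def IsGeodesicRay (ℓ : ℝ → X) : Prop :=
  ∀ s ∈ Ici (0:ℝ), ∀ t ∈ Ici (0:ℝ), dist (ℓ s) (ℓ t) = |s - t|

/-- A geodesic metric space: any two points are joined by a geodesic. -/
def GeodesicSpace (X : Type*) [MetricSpace X] : Prop :=
  ∀ x y : X, ∃ γ : ℝ → X, IsGeodesicFromTo γ x y

/-- A `(K, C)`-quasi-geodesic defined on the interval `I ⊆ ℝ`. -/
def IsQuasiGeodesicOn (K C : ℝ) (I : Set ℝ) (σ : ℝ → X) : Prop :=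
  ∀ s ∈ I, ∀ t ∈ I,
    |s - t| / K - C ≤ dist (σ s) (σ t) ∧ dist (σ s) (σ t) ≤ K * |s - t| + C

/-- A Morse gauge: a nonnegative real `N K C` for every `K ≥ 1`, `C ≥ 0`. -/
def IsMorseGauge (N : ℝ → ℝ → ℝ) : Prop :=
  ∀ K C : ℝ, 1 ≤ K → 0 ≤ C → 0 ≤ N K C

/-- A subset `G ⊆ X` is `N`-Morse if for all `K ≥ 1`, `C ≥ 0`, every
`(K,C)`-quasi-geodesic with endpoints on `G` is contained in the closed
`N K C`-neighbourhood of `G`. -/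
def IsMorseSet (N : ℝ → ℝ → ℝ) (G : Set X) : Prop :=
  ∀ K C : ℝ, 1 ≤ K → 0 ≤ C → ∀ a b : ℝ, a ≤ b → ∀ σ : ℝ → X,
    IsQuasiGeodesicOn K C (Icc a b) σ → σ a ∈ G → σ b ∈ G →
    ∀ s ∈ Icc a b, ∃ g ∈ G, dist (σ s) g ≤ N K C

/-- An `N`-Morse geodesic from `x` to `y`. -/
def IsMorseGeodesicFromTo (N : ℝ → ℝ → ℝ) (γ : ℝ → X) (x y : X) : Prop :=
  IsGeodesicFromTo γ x y ∧ IsMorseSet N (γ '' Icc 0 (dist x y))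

/-- An `N`-Morse geodesic ray. -/
def IsMorseRay (N : ℝ → ℝ → ℝ) (ℓ : ℝ → X) : Prop :=
  IsGeodesicRay ℓ ∧ IsMorseSet N (ℓ '' Ici 0)

/-- The stratum `X^(N)_e`: points joined to `e` by an `N`-Morse geodesic. -/
def morseStratum (N : ℝ → ℝ → ℝ) (e : X) : Set X :=
  {y | ∃ γ : ℝ → X, IsMorseGeodesicFromTo N γ e y}

/-- The Gromov product `(x·y)_w`. -/
noncomputable def gprod (w x y : X) : ℝ := (dist w x + dist w y - dist x y) / 2

/-- A `B`-quasi-convex subset: geodesics with endpoints in `Y` stay in the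
closed `B`-neighbourhood of `Y`. -/
def IsQuasiConvex (B : ℝ) (Y : Set X) : Prop :=
  ∀ x ∈ Y, ∀ y ∈ Y, ∀ γ : ℝ → X, IsGeodesicFromTo γ x y →
    ∀ s ∈ Icc (0:ℝ) (dist x y), ∃ g ∈ Y, dist (γ s) g ≤ B

/-- An `N`-stable subset: quasi-convex, and any two of its points are joined
by an `N`-Morse geodesic of `X`. -/
def IsStableSubset (N : ℝ → ℝ → ℝ) (Y : Set X) : Prop :=
  (∃ B : ℝ, 0 ≤ B ∧ IsQuasiConvex B Y) ∧
    ∀ x ∈ Y, ∀ y ∈ Y, ∃ γ : ℝ → X, IsMorseGeodesicFromTo N γ x y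

variable {Y : Type*} [MetricSpace Y]

/-- A `(K,C)`-quasi-isometric embedding. -/
def IsQIEmbedding (K C : ℝ) (q : X → Y) : Prop :=
  ∀ x x' : X,
    dist x x' / K - C ≤ dist (q x) (q x') ∧ dist (q x) (q x') ≤ K * dist x x' + C

/-- A `(K,C)`-quasi-isometry. -/
def IsQuasiIsometry (K C : ℝ) (q : X → Y) : Prop :=
  IsQIEmbedding K C q ∧ ∀ y : Y, ∃ x : X, dist y (q x) ≤ C

end Defs

section Boundary

variable {X : Type*} [MetricSpace X]

/-- A sequence converges at infinity with respect to the basepoint `e`. -/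
def ConvAtInf (e : X) (f : ℕ → X) : Prop :=
  Tendsto (fun p : ℕ × ℕ => gprod e (f p.1) (f p.2)) atTop atTop

/-- Two sequences converging at infinity are equivalent. -/
def EquivAtInf (e : X) (f g : ℕ → X) : Prop :=
  Tendsto (fun p : ℕ × ℕ => gprod e (f p.1) (g p.2)) atTop atTop

/-- Sequences in `S` converging at infinity. -/
abbrev BSeq (S : Set X) (e : X) : Type _ :=
  {f : ℕ → X // (∀ n, f n ∈ S) ∧ ConvAtInf e f}

/-- The sequential boundary of `S ⊆ X` with basepoint `e`: sequences in `S`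
converging at infinity, up to equivalence. -/
def SeqBoundary (S : Set X) (e : X) : Type _ :=
  Quot (fun f g : BSeq S e => EquivAtInf e f.1 g.1)

/-- The boundary point represented by a convergent sequence. -/
def SeqBoundary.mk {S : Set X} {e : X} (f : BSeq S e) : SeqBoundary S e :=
  Quot.mk _ f

/-- The liminf of Gromov products of two sequences, valued in `EReal`. -/
noncomputable def seqGP (e : X) (f g : ℕ → X) : EReal :=
  Filter.liminf (fun p : ℕ × ℕ => ((gprod e (f p.1) (g p.2) : ℝ) : EReal)) atTop

/-- The Gromov product of two boundary points: the supremum over representing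
sequences of the liminf of Gromov products. -/
noncomputable def bGP (S : Set X) (e : X) (ξ η : SeqBoundary S e) : EReal :=
  sSup {r : EReal | ∃ f g : BSeq S e,
    SeqBoundary.mk f = ξ ∧ SeqBoundary.mk g = η ∧ r = seqGP e f.1 g.1}

open Classical in
/-- `exp (−ε·r)` for an extended real `r`, with value `0` at `r = ⊤`. -/
noncomputable def visGauge (ε : ℝ) (r : EReal) : ℝ :=
  if r = ⊤ then 0 else Real.exp (-ε * r.toReal)

/-- `d` is a visual metric on the sequential boundary of `S`:
a metric comparable to `exp(−ε·(Gromov product))` for some parameter `ε > 0`. -/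
def IsVisualMetric (S : Set X) (e : X)
    (d : SeqBoundary S e → SeqBoundary S e → ℝ) : Prop :=
  (∀ ξ η, 0 ≤ d ξ η) ∧ (∀ ξ η, d ξ η = d η ξ) ∧
  (∀ ξ η ζ, d ξ ζ ≤ d ξ η + d η ζ) ∧ (∀ ξ η, d ξ η = 0 ↔ ξ = η) ∧
  ∃ ε : ℝ, 0 < ε ∧ ∃ k₁ : ℝ, 0 < k₁ ∧ ∃ k₂ : ℝ, 0 < k₂ ∧
    ∀ ξ η, k₁ * visGauge ε (bGP S e ξ η) ≤ d ξ η ∧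
      d ξ η ≤ k₂ * visGauge ε (bGP S e ξ η)

/-- `η` is (the restriction of) a self-homeomorphism of `[0,∞)`. -/
def IsHomeoIci (η : ℝ → ℝ) : Prop :=
  ContinuousOn η (Ici 0) ∧ StrictMonoOn η (Ici 0) ∧ η 0 = 0 ∧
    Tendsto η atTop atTop ∧ ∀ t ∈ Ici (0:ℝ), 0 ≤ η t

/-- `F` is a quasi-symmetry onto its image, for the "distances" `dA`, `dB`. -/
def IsQuasiSymmetryOnto {A B : Type*} (dA : A → A → ℝ) (dB : B → B → ℝ)
    (F : A → B) : Prop :=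
  Function.Injective F ∧ ∃ η : ℝ → ℝ, IsHomeoIci η ∧
    ∀ x y z : A, x ≠ y → x ≠ z → y ≠ z →
      dB (F x) (F y) / dB (F x) (F z) ≤ η (dA x y / dA x z)

end Boundary

/-- `X` (with basepoint `x`) is stably subsumed by `Y` (with basepoint `y`):
every stratum of `X` quasi-isometrically embeds in some stratum of `Y`. -/
def StablySubsumed (X Y : Type*) [MetricSpace X] [MetricSpace Y]
    (x : X) (y : Y) : Prop :=
  ∀ N : ℝ → ℝ → ℝ, IsMorseGauge N →
    ∃ N' : ℝ → ℝ → ℝ, IsMorseGauge N' ∧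
      ∃ K C : ℝ, 1 ≤ K ∧ 0 ≤ C ∧ ∃ f : X → Y,
        (∀ a ∈ morseStratum N x, f a ∈ morseStratum N' y) ∧
        ∀ a ∈ morseStratum N x, ∀ b ∈ morseStratum N x,
          dist a b / K - C ≤ dist (f a) (f b) ∧ dist (f a) (f b) ≤ K * dist a b + C

/-- Durham–Taylor stability of `f : Y → X`. -/
def DTStable {Y X : Type*} [MetricSpace Y] [MetricSpace X] (f : Y → X) : Prop :=
  ∀ K C : ℝ, 1 ≤ K → 0 ≤ C → ∃ R : ℝ, 0 ≤ R ∧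
    ∀ a₁ b₁ a₂ b₂ : ℝ, a₁ ≤ b₁ → a₂ ≤ b₂ → ∀ σ₁ σ₂ : ℝ → X,
      IsQuasiGeodesicOn K C (Icc a₁ b₁) σ₁ → IsQuasiGeodesicOn K C (Icc a₂ b₂) σ₂ →
      σ₁ a₁ = σ₂ a₂ → σ₁ b₁ = σ₂ b₂ →
      σ₁ a₁ ∈ Set.range f → σ₁ b₁ ∈ Set.range f →
      (∀ s ∈ Icc a₁ b₁, ∃ t ∈ Icc a₂ b₂, dist (σ₁ s) (σ₂ t) ≤ R) ∧
      (∀ t ∈ Icc a₂ b₂, ∃ s ∈ Icc a₁ b₁, dist (σ₁ s) (σ₂ t) ≤ R)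

/-! Let `z` be a point of `P` closest to `e`, `x` a point of `P` and `y` a point of a geodesic
from `z` to `e`. Minimality of `z` gives `dist x y ≥ dist z y`, and the triangle inequality gives
`dist x y ≥ dist x z - dist z y`; together, `dist x y ≥ (dist x z + dist z y) / 3`. So following
`P` from `xᵢ` to `z` and then a geodesic to `e` is a `(3,0)`-quasi-geodesic with both endpoints
on `ℓᵢ`, and the Morse property of `ℓᵢ` puts `z` within `N 3 0` of `ℓᵢ`. -/

noncomputable def concatAt {X : Type*} (f : ℝ → X) (m : ℝ) (γ : ℝ → X) : ℝ → X :=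
  fun s => if s ≤ m then f s else γ (s - m)

section ConcatAt

variable {X : Type*} {f γ : ℝ → X} {m : ℝ}

lemma concatAt_of_le {s : ℝ} (hs : s ≤ m) : concatAt f m γ s = f s := if_pos hs

lemma concatAt_of_lt {s : ℝ} (hs : m < s) : concatAt f m γ s = γ (s - m) := if_neg hs.not_ge

end ConcatAt

section Concatenation

variable {X : Type*} [MetricSpace X]

lemma dist_add_dist_le_three_mul_dist_of_closest {x y z e : X}
    (hy : dist z y + dist y e = dist z e) (hx : dist e z ≤ dist e x) :
    dist x z + dist z y ≤ 3 * dist x y := by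
  have hzy : dist z y ≤ dist x y := by
    linarith [dist_triangle e y x, dist_comm e y, dist_comm y x, dist_comm e z]
  linarith [dist_triangle x y z, dist_comm y z]

lemma IsGeodesicSeg.mono {f : ℝ → X} {L m : ℝ} (hf : IsGeodesicSeg f L) (hm : m ∈ Icc 0 L) :
    IsGeodesicSeg f m :=
  ⟨hm.1, fun s hs t ht => hf.2 s ⟨hs.1, hs.2.trans hm.2⟩ t ⟨ht.1, ht.2.trans hm.2⟩⟩

lemma IsGeodesicSeg.comp_sub {f : ℝ → X} {L m : ℝ} (hf : IsGeodesicSeg f L) (hm : m ∈ Icc 0 L) :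
    IsGeodesicSeg (fun s => f (L - s)) (L - m) := by
  refine ⟨by linarith [hm.2], fun s hs t ht => ?_⟩
  rw [hf.2 _ ⟨by linarith [hs.2, hm.1], by linarith [hs.1]⟩ _
    ⟨by linarith [ht.2, hm.1], by linarith [ht.1]⟩, abs_sub_comm]
  ring_nf

lemma IsGeodesicFromTo.dist_add_dist {γ : ℝ → X} {z e : X} (hγ : IsGeodesicFromTo γ z e)
    {s : ℝ} (hs : s ∈ Icc 0 (dist z e)) : dist z (γ s) + dist (γ s) e = dist z e := by
  obtain ⟨⟨hd, hiso⟩, h0, h1⟩ := hγ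
  have hz := hiso 0 ⟨le_rfl, hd⟩ s hs
  have he := hiso s hs _ ⟨hd, le_rfl⟩
  rw [h0] at hz
  rw [h1] at he
  rw [hz, he, abs_of_nonpos (by linarith [hs.1]), abs_of_nonpos (by linarith [hs.2])]
  ring

lemma isQuasiGeodesicOn_of_forall_le {K : ℝ} {I : Set ℝ} {σ : ℝ → X}
    (h : ∀ s ∈ I, ∀ t ∈ I, s ≤ t →
      (t - s) / K ≤ dist (σ s) (σ t) ∧ dist (σ s) (σ t) ≤ K * (t - s)) :
    IsQuasiGeodesicOn K 0 I σ := by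
  intro s hs t ht
  rcases le_total s t with hst | hts
  · rw [abs_of_nonpos (by linarith), neg_sub, sub_zero, add_zero]
    exact h s hs t ht hst
  · rw [abs_of_nonneg (by linarith), sub_zero, add_zero, dist_comm]
    exact h t ht s hs hts

variable {f γ : ℝ → X} {m : ℝ} {z e : X}

lemma concatAt_end (hfm : f m = z) (hγ : IsGeodesicFromTo γ z e) :
    concatAt f m γ (m + dist z e) = e := by
  rcases (dist_nonneg : 0 ≤ dist z e).eq_or_lt with hd | hd
  · rw [← hd, add_zero, concatAt_of_le le_rfl, hfm]
    exact dist_eq_zero.mp hd.symm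
  · rw [concatAt_of_lt (by linarith), add_sub_cancel_left]
    exact hγ.2.2

theorem isQuasiGeodesicOn_concatAt (hf : IsGeodesicSeg f m) (hfm : f m = z)
    (hmin : ∀ s ∈ Icc 0 m, dist e z ≤ dist e (f s)) (hγ : IsGeodesicFromTo γ z e) :
    IsQuasiGeodesicOn 3 0 (Icc 0 (m + dist z e)) (concatAt f m γ) := by
  refine isQuasiGeodesicOn_of_forall_le fun s hs t ht hst => ?_
  rcases le_or_gt t m with htm | hmt
  · rw [concatAt_of_le (hst.trans htm), concatAt_of_le htm,
      hf.2 s ⟨hs.1, hst.trans htm⟩ t ⟨ht.1, htm⟩, abs_of_nonpos (by linarith)]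
    constructor <;> linarith
  have ht' : t - m ∈ Icc 0 (dist z e) := ⟨by linarith, by linarith [ht.2]⟩
  rcases le_or_gt s m with hsm | hms
  · have hsz : dist (f s) z = m - s := by
      rw [← hfm, hf.2 s ⟨hs.1, hsm⟩ m ⟨hf.1, le_rfl⟩, abs_of_nonpos (by linarith)]
      ring
    have hzy : dist z (γ (t - m)) = t - m := by
      rw [← hγ.2.1, hγ.1.2 0 ⟨le_rfl, hγ.1.1⟩ _ ht', abs_of_nonpos (by linarith)]
      ring
    have hsum : dist (f s) z + dist z (γ (t - m)) = t - s := by rw [hsz, hzy]; ring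
    rw [concatAt_of_le hsm, concatAt_of_lt hmt]
    constructor
    · linarith [dist_add_dist_le_three_mul_dist_of_closest (hγ.dist_add_dist ht')
        (hmin s ⟨hs.1, hsm⟩)]
    · linarith [dist_triangle (f s) z (γ (t - m))]
  · have hs' : s - m ∈ Icc 0 (dist z e) := ⟨by linarith, by linarith [hs.2]⟩
    rw [concatAt_of_lt hms, concatAt_of_lt hmt, hγ.1.2 _ hs' _ ht',
      abs_of_nonpos (by linarith)]
    constructor <;> linarith

theorem IsMorseSet.exists_dist_le_of_closest {N : ℝ → ℝ → ℝ} {G : Set X} (hG : IsMorseSet N G)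
    (hf : IsGeodesicSeg f m) (hfm : f m = z) (hmin : ∀ s ∈ Icc 0 m, dist e z ≤ dist e (f s))
    (hγ : IsGeodesicFromTo γ z e) (hf0 : f 0 ∈ G) (he : e ∈ G) :
    ∃ g ∈ G, dist z g ≤ N 3 0 := by
  have hσ0 : concatAt f m γ 0 = f 0 := concatAt_of_le hf.1
  have hσm : concatAt f m γ m = z := (concatAt_of_le le_rfl).trans hfm
  have hm : m ∈ Icc 0 (m + dist z e) := ⟨hf.1, by linarith [dist_nonneg (x := z) (y := e)]⟩
  simpa only [hσm] using hG 3 0 (by norm_num) le_rfl 0 _ (hf.1.trans hm.2) _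
    (isQuasiGeodesicOn_concatAt hf hfm hmin hγ) (hσ0 ▸ hf0)
    ((concatAt_end hfm hγ).symm ▸ he) m hm

end Concatenation

theorem statement13_general {X : Type*} [MetricSpace X] (e : X)
    (ℓ₁ ℓ₂ : ℝ → X) (L₁ L₂ : ℝ)
    (he₁ : ℓ₁ 0 = e) (he₂ : ℓ₂ 0 = e)
    (t₁ t₂ : ℝ) (ht₁ : t₁ ∈ Icc (0:ℝ) L₁) (ht₂ : t₂ ∈ Icc (0:ℝ) L₂)
    (P : ℝ → X) (hP : IsGeodesicFromTo P (ℓ₁ t₁) (ℓ₂ t₂))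
    (u : ℝ) (hu : u ∈ Icc (0:ℝ) (dist (ℓ₁ t₁) (ℓ₂ t₂)))
    (humin : ∀ v ∈ Icc (0:ℝ) (dist (ℓ₁ t₁) (ℓ₂ t₂)),
      dist e (P u) ≤ dist e (P v))
    (γ : ℝ → X) (hγ : IsGeodesicFromTo γ (P u) e) :
    IsQuasiGeodesicOn 3 0 (Icc 0 (u + dist (P u) e))
      (fun s => if s ≤ u then P s else γ (s - u)) ∧
    IsQuasiGeodesicOn 3 0 (Icc 0 ((dist (ℓ₁ t₁) (ℓ₂ t₂) - u) + dist (P u) e))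
      (fun s => if s ≤ dist (ℓ₁ t₁) (ℓ₂ t₂) - u then
          P (dist (ℓ₁ t₁) (ℓ₂ t₂) - s)
        else γ (s - (dist (ℓ₁ t₁) (ℓ₂ t₂) - u))) ∧
    (∀ N : ℝ → ℝ → ℝ, IsMorseGauge N →
      IsMorseSet N (ℓ₁ '' Icc 0 L₁) → IsMorseSet N (ℓ₂ '' Icc 0 L₂) →
      (∃ s ∈ Icc (0:ℝ) L₁, dist (P u) (ℓ₁ s) ≤ N 3 0) ∧
      (∃ s ∈ Icc (0:ℝ) L₂, dist (P u) (ℓ₂ s) ≤ N 3 0)) := by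
  set D := dist (ℓ₁ t₁) (ℓ₂ t₂)
  have hf₁ : IsGeodesicSeg P u := hP.1.mono hu
  have hf₂ : IsGeodesicSeg (fun s => P (D - s)) (D - u) := hP.1.comp_sub hu
  have hfm₂ : P (D - (D - u)) = P u := congrArg P (sub_sub_cancel D u)
  have hmin₁ : ∀ s ∈ Icc 0 u, dist e (P u) ≤ dist e (P s) :=
    fun s hs => humin s ⟨hs.1, hs.2.trans hu.2⟩
  have hmin₂ : ∀ s ∈ Icc 0 (D - u), dist e (P u) ≤ dist e (P (D - s)) :=
    fun s hs => humin _ ⟨by linarith [hs.2, hu.1], by linarith [hs.1]⟩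
  refine ⟨isQuasiGeodesicOn_concatAt hf₁ rfl hmin₁ hγ,
    isQuasiGeodesicOn_concatAt hf₂ hfm₂ hmin₂ hγ, fun N _ hM₁ hM₂ => ⟨?_, ?_⟩⟩
  · obtain ⟨_, ⟨s, hs, rfl⟩, hdist⟩ := hM₁.exists_dist_le_of_closest hf₁ rfl hmin₁ hγ
      (by rw [hP.2.1]; exact mem_image_of_mem _ ht₁)
      (he₁ ▸ mem_image_of_mem _ ⟨le_rfl, ht₁.1.trans ht₁.2⟩)
    exact ⟨s, hs, hdist⟩
  · obtain ⟨_, ⟨s, hs, rfl⟩, hdist⟩ := hM₂.exists_dist_le_of_closest hf₂ hfm₂ hmin₂ hγ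
      (by rw [sub_zero, hP.2.2]; exact mem_image_of_mem _ ht₂)
      (he₂ ▸ mem_image_of_mem _ ⟨le_rfl, ht₂.1.trans ht₂.2⟩)
    exact ⟨s, hs, hdist⟩

/-- with `z` a point of a geodesic `P` from `x₁ ∈ ℓ₁` to
`x₂ ∈ ℓ₂` closest to `e`, the concatenations `x₁ →_P z →_γ e` and
`x₂ →_P z →_γ e` are `(3,0)`-quasi-geodesics; if `ℓ₁, ℓ₂` are `N`-Morse then
`z` is within `N(3,0)` of each of them. -/
theorem statement13 {X : Type*} [MetricSpace X] (hX : GeodesicSpace X) (e : X)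
    (ℓ₁ ℓ₂ : ℝ → X) (L₁ L₂ : ℝ)
    (hg₁ : IsGeodesicSeg ℓ₁ L₁) (hg₂ : IsGeodesicSeg ℓ₂ L₂)
    (he₁ : ℓ₁ 0 = e) (he₂ : ℓ₂ 0 = e)
    (t₁ t₂ : ℝ) (ht₁ : t₁ ∈ Icc (0:ℝ) L₁) (ht₂ : t₂ ∈ Icc (0:ℝ) L₂)
    (P : ℝ → X) (hP : IsGeodesicFromTo P (ℓ₁ t₁) (ℓ₂ t₂))
    (u : ℝ) (hu : u ∈ Icc (0:ℝ) (dist (ℓ₁ t₁) (ℓ₂ t₂)))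
    (humin : ∀ v ∈ Icc (0:ℝ) (dist (ℓ₁ t₁) (ℓ₂ t₂)),
      dist e (P u) ≤ dist e (P v))
    (γ : ℝ → X) (hγ : IsGeodesicFromTo γ (P u) e) :
    IsQuasiGeodesicOn 3 0 (Icc 0 (u + dist (P u) e))
      (fun s => if s ≤ u then P s else γ (s - u)) ∧
    IsQuasiGeodesicOn 3 0 (Icc 0 ((dist (ℓ₁ t₁) (ℓ₂ t₂) - u) + dist (P u) e))
      (fun s => if s ≤ dist (ℓ₁ t₁) (ℓ₂ t₂) - u then
          P (dist (ℓ₁ t₁) (ℓ₂ t₂) - s)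
        else γ (s - (dist (ℓ₁ t₁) (ℓ₂ t₂) - u))) ∧
    (∀ N : ℝ → ℝ → ℝ, IsMorseGauge N →
      IsMorseSet N (ℓ₁ '' Icc 0 L₁) → IsMorseSet N (ℓ₂ '' Icc 0 L₂) →
      (∃ s ∈ Icc (0:ℝ) L₁, dist (P u) (ℓ₁ s) ≤ N 3 0) ∧
      (∃ s ∈ Icc (0:ℝ) L₂, dist (P u) (ℓ₂ s) ≤ N 3 0)) :=
  statement13_general e ℓ₁ ℓ₂ L₁ L₂ he₁ he₂ t₁ t₂ ht₁ ht₂ P hP u hu humin γ hγ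
end

section
/- Given a Morse gauge N and constants K ≥ 1, C ≥ 0, there exist a constant A = A(N,K,C) and a Morse gauge N' = N'(N,K,C) such that the following holds. Let X and Y be geodesic metric spaces, let q : X → Y be a (K,C)-quasi-isometry, let e ∈ X, and let x, y, z ∈ X^(N)_e. Then q(x), q(y), q(z) ∈ Y^(N')_{q(e)} and |(x·y)_e − (x·z)_e|/K − A ≤ |(q(x)·q(y))_{q(e)} − (q(x)·q(z))_{q(e)}| ≤ K·|(x·y)_e − (x·z)_e| + A. -/
open Set Filter

/-!
A quasi-isometry `q` keeps a Morse geodesic `[e, w]` within bounded Hausdorff distance of any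
geodesic `[q e, q w]`: pull `[q e, q w]` back by a coarse inverse to a quasi-geodesic with
endpoints on `[e, w]`, and use the Morse property and a coarse intermediate value argument.
Transporting quasi-geodesics the same way shows that `[q e, q w]` is Morse.

For Morse geodesics `[e, x]` and `[e, y]`, the point of `[e, x]` at distance `(x·y)_e` from `e`
is a coarse branch point: `[e, y]` passes close to it, and so does every quasi-geodesic from `x`
to `y`. To see the latter, cut the quasi-geodesic where it comes coarsely closest to `e` and
continue along a geodesic to `e`; this is again a quasi-geodesic, with endpoints on `[e, x]`
(and, reversed, on `[e, y]`). Consequently `q` sends the branch point of `[e, x]`, `[e, y]`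
close to that of `[q e, q x]`, `[q e, q y]`. The two differences of Gromov products are then,
up to bounded error, distances between two points of `[e, x]` and between their images on
`[q e, q x]`, which `q` distorts by at most the factor `K`.
-/

section Geodesic

variable {X : Type*} [MetricSpace X]

theorem gprod_comm (e x y : X) : gprod e x y = gprod e y x := by
  unfold gprod
  rw [add_comm (dist e x), dist_comm x]

theorem gprod_mem_Icc_dist_left (e x y : X) : gprod e x y ∈ Icc 0 (dist e x) := by
  unfold gprod
  constructor <;> linarith [dist_triangle x e y, dist_comm x e, dist_triangle e x y]

theorem gprod_mem_Icc_dist_right (e x y : X) : gprod e x y ∈ Icc 0 (dist e y) := by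
  unfold gprod
  constructor <;> linarith [dist_triangle x e y, dist_comm x e, dist_triangle e y x, dist_comm x y]

namespace IsGeodesicFromTo

variable {γ β η : ℝ → X} {a b e x y : X}

theorem dist_eq (h : IsGeodesicFromTo γ a b) {s t : ℝ} (hs : s ∈ Icc 0 (dist a b))
    (ht : t ∈ Icc 0 (dist a b)) : dist (γ s) (γ t) = |s - t| :=
  h.1.2 s hs t ht

theorem dist_left (h : IsGeodesicFromTo γ a b) {t : ℝ} (ht : t ∈ Icc 0 (dist a b)) :
    dist a (γ t) = t := by
  have := h.dist_eq (left_mem_Icc.2 dist_nonneg) ht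
  rwa [h.2.1, zero_sub, abs_neg, abs_of_nonneg ht.1] at this

theorem dist_right (h : IsGeodesicFromTo γ a b) {t : ℝ} (ht : t ∈ Icc 0 (dist a b)) :
    dist (γ t) b = dist a b - t := by
  have := h.dist_eq ht (right_mem_Icc.2 dist_nonneg)
  rwa [h.2.2, abs_of_nonpos (sub_nonpos.2 ht.2), neg_sub] at this

theorem left_mem_image (h : IsGeodesicFromTo γ a b) : a ∈ γ '' Icc 0 (dist a b) :=
  ⟨0, left_mem_Icc.2 dist_nonneg, h.2.1⟩

theorem right_mem_image (h : IsGeodesicFromTo γ a b) : b ∈ γ '' Icc 0 (dist a b) :=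
  ⟨_, right_mem_Icc.2 dist_nonneg, h.2.2⟩

theorem isQuasiGeodesicOn (h : IsGeodesicFromTo γ a b) {K C : ℝ} (hK : 1 ≤ K) (hC : 0 ≤ C) :
    IsQuasiGeodesicOn K C (Icc 0 (dist a b)) γ := by
  intro s hs t ht
  rw [h.dist_eq hs ht]
  have h0 := abs_nonneg (s - t)
  exact ⟨by linarith [div_le_self h0 hK], by nlinarith⟩

theorem gprod_le_dist (h : IsGeodesicFromTo η x y) (e : X) {c : ℝ}
    (hc : c ∈ Icc 0 (dist x y)) : gprod e x y ≤ dist e (η c) := by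
  have hx := dist_triangle e (η c) x
  have hy := dist_triangle e (η c) y
  rw [dist_comm (η c) x, h.dist_left hc] at hx
  rw [h.dist_right hc] at hy
  unfold gprod
  linarith

theorem le_gprod_add_dist (hγ : IsGeodesicFromTo γ e x) (hβ : IsGeodesicFromTo β e y)
    {u v : ℝ} (hu : u ∈ Icc 0 (dist e x)) (hv : v ∈ Icc 0 (dist e y)) :
    u ≤ gprod e x y + dist (γ u) (β v) := by
  have hxy : dist x y ≤ dist (γ u) x + dist (γ u) (β v) + dist (β v) y := by
    linarith [dist_triangle x (γ u) y, dist_triangle (γ u) (β v) y, dist_comm x (γ u)]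
  have huv : u ≤ v + dist (γ u) (β v) := by
    have := dist_triangle e (β v) (γ u)
    rw [hγ.dist_left hu, hβ.dist_left hv, dist_comm (β v)] at this
    exact this
  rw [hγ.dist_right hu, hβ.dist_right hv] at hxy
  unfold gprod
  linarith

end IsGeodesicFromTo

end Geodesic

section QuasiGeodesic

variable {X Y : Type*} [MetricSpace X] [MetricSpace Y]

theorem isQuasiGeodesicOn_of_le {K C : ℝ} {I : Set ℝ} {σ : ℝ → X}
    (h : ∀ s ∈ I, ∀ t ∈ I, s ≤ t →
      |s - t| / K - C ≤ dist (σ s) (σ t) ∧ dist (σ s) (σ t) ≤ K * |s - t| + C) :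
    IsQuasiGeodesicOn K C I σ := by
  intro s hs t ht
  rcases le_total s t with hst | hst
  · exact h s hs t ht hst
  · rw [dist_comm, abs_sub_comm]
    exact h t ht s hs hst

namespace IsQuasiGeodesicOn

variable {K C : ℝ} {I : Set ℝ} {σ : ℝ → X}

theorem mono {J : Set ℝ}
    (h : IsQuasiGeodesicOn K C I σ) (hJ : J ⊆ I) : IsQuasiGeodesicOn K C J σ :=
  fun s hs t ht => h s (hJ hs) t (hJ ht)

theorem reverse {ℓ : ℝ} (h : IsQuasiGeodesicOn K C (Icc 0 ℓ) σ) :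
    IsQuasiGeodesicOn K C (Icc 0 ℓ) (fun s => σ (ℓ - s)) := by
  intro s hs t ht
  have := h (ℓ - s) ⟨by linarith [hs.2], by linarith [hs.1]⟩ (ℓ - t)
    ⟨by linarith [ht.2], by linarith [ht.1]⟩
  rwa [sub_sub_sub_cancel_left, abs_sub_comm] at this

theorem of_dist_le {σ' : ℝ → X} {ε : ℝ} (h : IsQuasiGeodesicOn K C I σ)
    (hd : ∀ s ∈ I, dist (σ' s) (σ s) ≤ ε) : IsQuasiGeodesicOn K (C + 2 * ε) I σ' := by
  intro s hs t ht
  have h₁ := dist_triangle4 (σ' s) (σ s) (σ t) (σ' t)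
  have h₂ := dist_triangle4 (σ s) (σ' s) (σ' t) (σ t)
  have := h s hs t ht
  constructor <;>
    linarith [hd s hs, hd t ht, dist_comm (σ s) (σ' s), dist_comm (σ t) (σ' t)]

theorem comp {K' C' : ℝ} {f : X → Y} (h : IsQuasiGeodesicOn K C I σ)
    (hf : IsQIEmbedding K' C' f) (hK' : 1 ≤ K') (hC : 0 ≤ C) :
    IsQuasiGeodesicOn (K' * K) (K' * C + C') I (fun s => f (σ s)) := by
  intro s hs t ht
  obtain ⟨hl, hu⟩ := h s hs t ht
  obtain ⟨hfl, hfu⟩ := hf (σ s) (σ t)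
  constructor
  · have : (|s - t| / K - C) / K' ≤ dist (σ s) (σ t) / K' := by gcongr
    rw [sub_div, div_div, mul_comm K] at this
    linarith [div_le_self hC hK', le_mul_of_one_le_left hC hK']
  · nlinarith

theorem exists_update_endpoints {a b ε : ℝ} {u v : X} (h : IsQuasiGeodesicOn K C (Icc a b) σ)
    (hab : a < b) (hε : 0 ≤ ε) (hu : dist u (σ a) ≤ ε) (hv : dist v (σ b) ≤ ε) :
    ∃ τ : ℝ → X, IsQuasiGeodesicOn K (C + 2 * ε) (Icc a b) τ ∧ τ a = u ∧ τ b = v ∧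
      ∀ s ∈ Ioo a b, τ s = σ s := by
  refine ⟨fun s => if s = a then u else if s = b then v else σ s, h.of_dist_le ?_,
    if_pos rfl, by simp [hab.ne'], fun s hs => by simp [hs.1.ne', hs.2.ne]⟩
  intro s _
  by_cases hsa : s = a
  · simpa [hsa] using hu
  by_cases hsb : s = b
  · simpa [hsb, hab.ne'] using hv
  simpa [hsa, hsb] using hε

end IsQuasiGeodesicOn

end QuasiGeodesic

section CoarseIVT

theorem intermediate_value_Icc_coarse {ψ : ℝ → ℝ} {a b J t : ℝ} (hab : a ≤ b)
    (hstep : ∀ s ∈ Icc a b, ∀ s' ∈ Icc a b, |s - s'| ≤ 1 → |ψ s - ψ s'| ≤ J)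
    (ha : ψ a ≤ t) (hb : t ≤ ψ b) : ∃ s ∈ Icc a b, |ψ s - t| ≤ J := by
  set f : ℕ → ℝ := fun k => min (a + k) b
  have hf : ∀ k, f k ∈ Icc a b := fun k =>
    ⟨le_min (by linarith [k.cast_nonneg (α := ℝ)]) hab, min_le_right _ _⟩
  have hex : ∃ k, t ≤ ψ (f k) := ⟨⌈b - a⌉₊, by
    rwa [show f ⌈b - a⌉₊ = b from min_eq_right (by linarith [Nat.le_ceil (b - a)])]⟩
  have hfind := Nat.find_spec hex
  cases hk : Nat.find hex with
  | zero =>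
    have hf0 : f 0 = a := by simp [f, hab]
    rw [hk, hf0] at hfind
    refine ⟨a, left_mem_Icc.2 hab, ?_⟩
    rw [le_antisymm ha hfind, sub_self, abs_zero]
    simpa using hstep a (left_mem_Icc.2 hab) a (left_mem_Icc.2 hab)
  | succ m =>
    rw [hk] at hfind
    have hm : ψ (f m) < t := not_le.1 (Nat.find_min hex (by omega))
    have hclose : |f (m + 1) - f m| ≤ 1 := by
      simp only [f, Nat.cast_succ]
      rw [abs_le]
      constructor <;> cases min_cases (a + m) b <;> cases min_cases (a + (m + 1)) b <;> linarith
    have := abs_le.1 (hstep _ (hf (m + 1)) _ (hf m) hclose)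
    exact ⟨f (m + 1), hf (m + 1), abs_le.2 ⟨by linarith, by linarith⟩⟩

theorem intermediate_value_uIcc_coarse {ψ : ℝ → ℝ} {a b J t : ℝ} (hab : a ≤ b)
    (hstep : ∀ s ∈ Icc a b, ∀ s' ∈ Icc a b, |s - s'| ≤ 1 → |ψ s - ψ s'| ≤ J)
    (ht : t ∈ uIcc (ψ a) (ψ b)) : ∃ s ∈ Icc a b, |ψ s - t| ≤ J := by
  rcases le_total (ψ a) (ψ b) with h | h
  · rw [uIcc_of_le h] at ht
    exact intermediate_value_Icc_coarse hab hstep ht.1 ht.2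
  · rw [uIcc_of_ge h] at ht
    obtain ⟨s, hs, hst⟩ := intermediate_value_Icc_coarse (ψ := fun s => -ψ s) (t := -t) hab
      (fun s hs s' hs' hss' => by rw [neg_sub_neg, abs_sub_comm]; exact hstep s hs s' hs' hss')
      (neg_le_neg ht.2) (neg_le_neg ht.1)
    rw [neg_sub_neg, abs_sub_comm] at hst
    exact ⟨s, hs, hst⟩

end CoarseIVT

section FellowTravel

variable {X : Type*} [MetricSpace X]

theorem IsGeodesicFromTo.exists_dist_le_of_near {α τ : ℝ → X} {e w : X}
    (hα : IsGeodesicFromTo α e w) {K C ν a b : ℝ} (hK : 0 ≤ K)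
    (hτ : IsQuasiGeodesicOn K C (Icc a b) τ) (hab : a ≤ b) (hnear : ∀ s ∈ Icc a b, ∃ t ∈ Icc 0 (dist e w), dist (τ s) (α t) ≤ ν)
    {t : ℝ} (ht : t ∈ Icc 0 (dist e w)) (ht' : t ∈ uIcc (dist e (τ a)) (dist e (τ b))) :
    ∃ s ∈ Icc a b, dist (α t) (τ s) ≤ K + C + 2 * ν := by
  have hstep : ∀ s ∈ Icc a b, ∀ s' ∈ Icc a b, |s - s'| ≤ 1 →
      |dist e (τ s) - dist e (τ s')| ≤ K + C := by
    intro s hs s' hs' hss'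
    have := abs_dist_sub_le (τ s) (τ s') e
    rw [dist_comm (τ s), dist_comm (τ s')] at this
    nlinarith [(hτ s hs s' hs').2]
  obtain ⟨s, hs, hst⟩ := intermediate_value_uIcc_coarse hab hstep ht'
  obtain ⟨t', ht'I, hτt'⟩ := hnear s hs
  have hparam : |dist e (τ s) - t'| ≤ ν := by
    have := abs_dist_sub_le (τ s) (α t') e
    rw [dist_comm (τ s), dist_comm (α t'), hα.dist_left ht'I] at this
    exact this.trans hτt'
  refine ⟨s, hs, ?_⟩
  have := dist_triangle (α t) (α t') (τ s)
  rw [hα.dist_eq ht ht'I, dist_comm (α t')] at this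
  linarith [abs_sub_le t (dist e (τ s)) t', abs_sub_comm t (dist e (τ s))]

end FellowTravel

section Surgery

variable {X : Type*} [MetricSpace X]

theorem IsQuasiGeodesicOn.dist_append_geodesic_bounds {K C c : ℝ} (hK : 1 ≤ K) (hC : 0 ≤ C)
    {τ g : ℝ → X} {e : X} (hτ : IsQuasiGeodesicOn K C (Icc 0 c) τ) (hc : 0 ≤ c)
    (hg : IsGeodesicFromTo g (τ c) e) (hmin : ∀ s ∈ Icc 0 c, dist e (τ c) ≤ dist e (τ s) + 1)
    {s r : ℝ} (hs : s ∈ Icc 0 c) (hr : r ∈ Icc 0 (dist (τ c) e)) :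
    (c - s + r) / (4 * K) - (C + 1) ≤ dist (τ s) (g r) ∧
      dist (τ s) (g r) ≤ 4 * K * (c - s + r) + (C + 1) := by
  have hK0 : 0 < K := by linarith
  have hτs := hτ s hs c (right_mem_Icc.2 hc)
  rw [abs_of_nonpos (by linarith [hs.2]), neg_sub] at hτs
  have hgc := hg.dist_left hr
  -- coarse minimality of `dist e (τ c)` keeps the geodesic leg from doubling back to `τ s`
  have h₁ : r - 1 ≤ dist (τ s) (g r) := by
    linarith [hmin s hs, hg.dist_right hr, dist_comm e (τ c), dist_comm (g r) e,
      dist_comm (g r) (τ s), dist_triangle e (g r) (τ s)]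
  have h₂ : (c - s) / K - C - r ≤ dist (τ s) (g r) := by
    linarith [dist_triangle (τ s) (g r) (τ c), dist_comm (g r) (τ c)]
  have hsplit : (c - s + r) / (4 * K) ≤ (c - s) / K / 4 + r / 4 := by
    rw [add_div, div_div, mul_comm 4 K]
    gcongr
    · linarith [hr.1]
    · linarith
  have : 0 ≤ (c - s) / K := div_nonneg (by linarith [hs.2]) hK0.le
  constructor
  · rcases le_total (3 * r) ((c - s) / K) with h | h <;> linarith
  · nlinarith [dist_triangle (τ s) (τ c) (g r), hr.1, hs.2]

theorem IsQuasiGeodesicOn.exists_append_geodesic (hX : GeodesicSpace X) {K C c : ℝ}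
    (hK : 1 ≤ K) (hC : 0 ≤ C) {τ : ℝ → X} (hτ : IsQuasiGeodesicOn K C (Icc 0 c) τ)
    (hc : 0 ≤ c) (e : X) (hmin : ∀ s ∈ Icc 0 c, dist e (τ c) ≤ dist e (τ s) + 1) :
    ∃ V : ℝ → X, ∃ ℓ, c ≤ ℓ ∧ IsQuasiGeodesicOn (4 * K) (C + 1) (Icc 0 ℓ) V ∧
      (∀ s ∈ Icc 0 c, V s = τ s) ∧ V ℓ = e := by
  obtain ⟨g, hg⟩ := hX (τ c) e
  set R := dist (τ c) e
  have hR : 0 ≤ R := dist_nonneg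
  refine ⟨fun s => if s ≤ c then τ s else g (s - c), c + R, by linarith,
    isQuasiGeodesicOn_of_le ?_, fun s hs => if_pos hs.2, ?_⟩
  · intro s hs t ht hst
    rw [abs_sub_comm, abs_of_nonneg (by linarith)]
    by_cases htc : t ≤ c
    · simp only [if_pos htc, if_pos (hst.trans htc)]
      have := hτ s ⟨hs.1, hst.trans htc⟩ t ⟨ht.1, htc⟩
      rw [abs_sub_comm, abs_of_nonneg (by linarith)] at this
      have : (t - s) / (4 * K) ≤ (t - s) / K :=
        div_le_div_of_nonneg_left (by linarith) (by linarith) (by linarith)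
      constructor <;> nlinarith
    by_cases hsc : s ≤ c
    · simp only [if_pos hsc, if_neg htc]
      have := hτ.dist_append_geodesic_bounds hK hC hc hg hmin ⟨hs.1, hsc⟩
        (r := t - c) ⟨by linarith, by linarith [ht.2]⟩
      rwa [show c - s + (t - c) = t - s by ring] at this
    · simp only [if_neg htc, if_neg hsc]
      rw [hg.dist_eq ⟨by linarith, by linarith [hs.2]⟩ ⟨by linarith, by linarith [ht.2]⟩,
        show s - c - (t - c) = s - t by ring, abs_sub_comm, abs_of_nonneg (by linarith)]
      have : (t - s) / (4 * K) ≤ t - s := div_le_self (by linarith) (by linarith)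
      constructor <;> nlinarith
  · dsimp only
    rcases hR.eq_or_lt with hR0 | hR0
    · rw [← hR0, add_zero, if_pos le_rfl]
      exact dist_eq_zero.1 hR0.symm
    · rw [if_neg (by linarith), add_sub_cancel_left]
      exact hg.2.2

end Surgery

section Switch

variable {X : Type*} [MetricSpace X] {N : ℝ → ℝ → ℝ}

theorem IsMorseGeodesicFromTo.exists_near {γ σ : ℝ → X} {x y : X}
    (hγ : IsMorseGeodesicFromTo N γ x y) {K C a b : ℝ} (hK : 1 ≤ K) (hC : 0 ≤ C)
    (hab : a ≤ b) (hσ : IsQuasiGeodesicOn K C (Icc a b) σ)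
    (ha : σ a ∈ γ '' Icc 0 (dist x y)) (hb : σ b ∈ γ '' Icc 0 (dist x y)) :
    ∀ s ∈ Icc a b, ∃ t ∈ Icc 0 (dist x y), dist (σ s) (γ t) ≤ N K C := by
  intro s hs
  obtain ⟨_, ⟨t, ht, rfl⟩, hst⟩ := hγ.2 K C hK hC a b hab σ hσ ha hb s hs
  exact ⟨t, ht, hst⟩

theorem IsMorseGeodesicFromTo.near_of_isCoarseMin (hX : GeodesicSpace X) {γ τ : ℝ → X}
    {e x : X} (hγ : IsMorseGeodesicFromTo N γ e x) {K C c : ℝ} (hK : 1 ≤ K) (hC : 0 ≤ C)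
    (hc : 0 ≤ c) (hτ : IsQuasiGeodesicOn K C (Icc 0 c) τ) (hτ0 : τ 0 = x)
    (hmin : ∀ s ∈ Icc 0 c, dist e (τ c) ≤ dist e (τ s) + 1) :
    ∀ s ∈ Icc 0 c, ∃ u ∈ Icc 0 (dist e x), dist (τ s) (γ u) ≤ N (4 * K) (C + 1) := by
  -- appending a geodesic back to `e` gives a quasi-geodesic with both endpoints on `[e, x]`
  obtain ⟨V, ℓ, hcℓ, hV, hVτ, hVℓ⟩ := hτ.exists_append_geodesic hX hK hC hc e hmin
  have hnear := hγ.exists_near (by linarith) (by linarith) (hc.trans hcℓ) hV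
    (by rw [hVτ 0 (left_mem_Icc.2 hc), hτ0]; exact hγ.1.right_mem_image)
    (by rw [hVℓ]; exact hγ.1.left_mem_image)
  intro s hs
  rw [← hVτ s hs]
  exact hnear s ⟨hs.1, hs.2.trans hcℓ⟩

theorem exists_switch_point (hX : GeodesicSpace X) {γ β τ : ℝ → X} {e x y : X}
    (hγ : IsMorseGeodesicFromTo N γ e x) (hβ : IsMorseGeodesicFromTo N β e y)
    {K C ℓ : ℝ} (hK : 1 ≤ K) (hC : 0 ≤ C) (hℓ : 0 ≤ ℓ)
    (hτ : IsQuasiGeodesicOn K C (Icc 0 ℓ) τ) (hτ0 : τ 0 = x) (hτℓ : τ ℓ = y) :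
    ∃ c ∈ Icc 0 ℓ,
      (∀ s ∈ Icc 0 c, ∃ u ∈ Icc 0 (dist e x), dist (τ s) (γ u) ≤ N (4 * K) (C + 1)) ∧
      ∃ v ∈ Icc 0 (dist e y), dist (τ c) (β v) ≤ N (4 * K) (C + 1) := by
  set S := (fun s => dist e (τ s)) '' Icc 0 ℓ
  have hS : S.Nonempty := ⟨_, mem_image_of_mem _ (left_mem_Icc.2 hℓ)⟩
  have hS' : BddBelow S := ⟨0, by rintro _ ⟨_, _, rfl⟩; exact dist_nonneg⟩
  obtain ⟨_, ⟨c, hc, rfl⟩, hlt⟩ := exists_lt_of_csInf_lt hS (lt_add_one (sInf S))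
  have hmin : ∀ s ∈ Icc 0 ℓ, dist e (τ c) ≤ dist e (τ s) + 1 := fun s hs => by
    linarith [csInf_le hS' (mem_image_of_mem _ hs)]
  refine ⟨c, hc, hγ.near_of_isCoarseMin hX hK hC hc.1
    (hτ.mono (Icc_subset_Icc_right hc.2)) hτ0 fun s hs => hmin s ⟨hs.1, hs.2.trans hc.2⟩, ?_⟩
  have hc' : ℓ - c ∈ Icc 0 ℓ := ⟨by linarith [hc.2], by linarith [hc.1]⟩
  have := hβ.near_of_isCoarseMin hX hK hC hc'.1 (hτ.reverse.mono (Icc_subset_Icc_right hc'.2))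
    (by simpa using hτℓ) (fun s hs => by
      rw [sub_sub_cancel]
      exact hmin _ ⟨by linarith [hs.2, hc.1], by linarith [hs.1]⟩) (ℓ - c) (right_mem_Icc.2 hc'.1)
  simpa only [sub_sub_cancel] using this

theorem IsMorseGeodesicFromTo.dist_gprod_le (hX : GeodesicSpace X) {γ β : ℝ → X} {e x y : X}
    (hγ : IsMorseGeodesicFromTo N γ e x) (hβ : IsMorseGeodesicFromTo N β e y) :
    dist (γ (gprod e x y)) (β (gprod e x y)) ≤ 6 * N 4 1 := by
  obtain ⟨η, hη⟩ := hX x y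
  obtain ⟨c, hc, hcover, v, hv, hβv⟩ := exists_switch_point hX hγ hβ le_rfl le_rfl dist_nonneg
    (hη.isQuasiGeodesicOn le_rfl le_rfl) hη.2.1 hη.2.2
  obtain ⟨u, hu, hγu⟩ := hcover c (right_mem_Icc.2 hc.1)
  norm_num at hγu hβv
  have hγβ : dist (γ u) (β v) ≤ 2 * N 4 1 := by
    linarith [dist_triangle (γ u) (η c) (β v), dist_comm (γ u) (η c)]
  have hu₁ := hγ.1.le_gprod_add_dist hβ.1 hu hv
  have hv₁ := hβ.1.le_gprod_add_dist hγ.1 hv hu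
  rw [gprod_comm, dist_comm] at hv₁
  have hp := hη.gprod_le_dist e hc
  have hpu := dist_triangle e (γ u) (η c)
  have hpv := dist_triangle e (β v) (η c)
  rw [hγ.1.dist_left hu, dist_comm (γ u)] at hpu
  rw [hβ.1.dist_left hv, dist_comm (β v)] at hpv
  have hγp : dist (γ (gprod e x y)) (γ u) ≤ 2 * N 4 1 := by
    rw [hγ.1.dist_eq (gprod_mem_Icc_dist_left e x y) hu, abs_le']
    constructor <;> linarith
  have hβp : dist (β v) (β (gprod e x y)) ≤ 2 * N 4 1 := by
    rw [hβ.1.dist_eq hv (gprod_mem_Icc_dist_right e x y), abs_le']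
    constructor <;> linarith
  linarith [dist_triangle4 (γ (gprod e x y)) (γ u) (β v) (β (gprod e x y))]

noncomputable def morseBranchConst (N : ℝ → ℝ → ℝ) (K C : ℝ) : ℝ := 3 * N (4 * K) (C + 1) + K + C

theorem IsMorseGeodesicFromTo.exists_near_gprod (hX : GeodesicSpace X) {γ β τ : ℝ → X}
    {e x y : X} (hγ : IsMorseGeodesicFromTo N γ e x) (hβ : IsMorseGeodesicFromTo N β e y)
    {K C ℓ : ℝ} (hK : 1 ≤ K) (hC : 0 ≤ C) (hℓ : 0 ≤ ℓ)
    (hτ : IsQuasiGeodesicOn K C (Icc 0 ℓ) τ) (hτ0 : τ 0 = x) (hτℓ : τ ℓ = y) :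
    ∃ c ∈ Icc 0 ℓ, dist (γ (gprod e x y)) (τ c) ≤ morseBranchConst N K C := by
  obtain ⟨c, hc, hcover, v, hv, hβv⟩ := exists_switch_point hX hγ hβ hK hC hℓ hτ hτ0 hτℓ
  obtain ⟨u, hu, hγu⟩ := hcover c (right_mem_Icc.2 hc.1)
  have hp := gprod_mem_Icc_dist_left e x y
  have hup : u ≤ gprod e x y + 2 * N (4 * K) (C + 1) := by
    linarith [hγ.1.le_gprod_add_dist hβ.1 hu hv, dist_triangle (γ u) (τ c) (β v),
      dist_comm (γ u) (τ c)]
  have hecu := dist_triangle e (γ u) (τ c)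
  rw [hγ.1.dist_left hu, dist_comm (γ u)] at hecu
  unfold morseBranchConst
  rcases le_or_gt (gprod e x y) (dist e (τ c)) with hpc | hpc
  · refine ⟨c, hc, ?_⟩
    have hpu : dist (γ (gprod e x y)) (γ u) ≤ 2 * N (4 * K) (C + 1) := by
      rw [hγ.1.dist_eq hp hu, abs_le']
      constructor <;> linarith
    linarith [dist_triangle (γ (gprod e x y)) (γ u) (τ c), dist_comm (γ u) (τ c)]
  · -- before time `c`, `τ` follows `[e, x]` from `x` down to below distance `(x·y)_e` from `e`
    obtain ⟨s, hs, hps⟩ := hγ.1.exists_dist_le_of_near (by linarith)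
      (hτ.mono (Icc_subset_Icc_right hc.2)) hc.1 hcover hp
      (by rw [hτ0, uIcc_of_ge (by linarith [hp.2])]; exact ⟨hpc.le, hp.2⟩)
    exact ⟨s, ⟨hs.1, hs.2.trans hc.2⟩, by linarith [dist_nonneg (x := τ c) (y := γ u)]⟩

end Switch

noncomputable def qiHausdorffConst (N : ℝ → ℝ → ℝ) (K C : ℝ) : ℝ :=
  K * (K + 7 * (K * C) + 2 * N K (7 * (K * C))) + 2 * C

noncomputable def qiMorseGauge (N : ℝ → ℝ → ℝ) (K C : ℝ) : ℝ → ℝ → ℝ := fun K₂ C₂ =>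
  K * N (K * K₂) (K * C₂ + 3 * (K * C) + 2 * (K * qiHausdorffConst N K C + 5 * (K * C))) +
    2 * C + qiHausdorffConst N K C

noncomputable def qiGprodConst (N : ℝ → ℝ → ℝ) (K C : ℝ) : ℝ :=
  3 * qiHausdorffConst N K C + K * (morseBranchConst N K (7 * (K * C)) + 6 * N 4 1) + 2 * C

section Constants

variable {N : ℝ → ℝ → ℝ} {K C : ℝ}

theorem qiHausdorffConst_nonneg (hN : IsMorseGauge N) (hK : 1 ≤ K) (hC : 0 ≤ C) :
    0 ≤ qiHausdorffConst N K C := by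
  have := hN K (7 * (K * C)) hK (by positivity)
  unfold qiHausdorffConst
  positivity

theorem isMorseGauge_qiMorseGauge (hN : IsMorseGauge N) (hK : 1 ≤ K) (hC : 0 ≤ C) :
    IsMorseGauge (qiMorseGauge N K C) := by
  intro K₂ C₂ hK₂ hC₂
  have := qiHausdorffConst_nonneg hN hK hC
  have := hN (K * K₂) (K * C₂ + 3 * (K * C) + 2 * (K * qiHausdorffConst N K C + 5 * (K * C)))
    (by nlinarith) (by positivity)
  unfold qiMorseGauge
  positivity

end Constants

section QuasiInverse

variable {X Y : Type*} [MetricSpace X] [MetricSpace Y]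

structure IsQuasiInverse (K C : ℝ) (q : X → Y) (q' : Y → X) : Prop where
  one_le : 1 ≤ K
  nonneg : 0 ≤ C
  isQIEmbedding : IsQIEmbedding K C q
  isQIEmbedding_inv : IsQIEmbedding K (3 * (K * C)) q'
  dist_apply_inv : ∀ y, dist y (q (q' y)) ≤ C
  dist_inv_apply : ∀ x, dist x (q' (q x)) ≤ 2 * (K * C)

theorem IsQuasiIsometry.exists_isQuasiInverse {K C : ℝ} (hK : 1 ≤ K) (hC : 0 ≤ C) {q : X → Y}
    (hq : IsQuasiIsometry K C q) : ∃ q' : Y → X, IsQuasiInverse K C q q' := by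
  have hK0 : 0 < K := by linarith
  choose q' hq' using hq.2
  refine ⟨q', hK, hC, hq.1, fun a b => ?_, hq', fun x => ?_⟩
  · obtain ⟨hl, hu⟩ := hq.1 (q' a) (q' b)
    have hqab : dist (q (q' a)) (q (q' b)) ≤ dist a b + 2 * C := by
      linarith [dist_triangle4 (q (q' a)) a b (q (q' b)), dist_comm (q (q' a)) a, hq' a, hq' b]
    have habq : dist a b ≤ dist (q (q' a)) (q (q' b)) + 2 * C := by
      linarith [dist_triangle4 a (q (q' a)) (q (q' b)) b, dist_comm (q (q' b)) b, hq' a, hq' b]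
    rw [div_sub' hK0.ne', div_le_iff₀ hK0] at hl
    have hKKC : C ≤ K * K * C := le_mul_of_one_le_left hC (by nlinarith)
    constructor
    · rw [sub_le_iff_le_add, div_le_iff₀ hK0]
      nlinarith
    · nlinarith
  · have := (hq.1 x (q' (q x))).1
    rw [div_sub' hK0.ne', div_le_iff₀ hK0] at this
    nlinarith [dist_comm (q x) (q (q' (q x))), hq' (q x)]

namespace IsQuasiInverse

variable {K C : ℝ} {q : X → Y} {q' : Y → X} {N : ℝ → ℝ → ℝ}

theorem exists_pullback (hP : IsQuasiInverse K C q q') {a b : X} {α' : ℝ → Y}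
    (hα' : IsGeodesicFromTo α' (q a) (q b)) (hpos : 0 < dist (q a) (q b)) :
    ∃ τ : ℝ → X, IsQuasiGeodesicOn K (7 * (K * C)) (Icc 0 (dist (q a) (q b))) τ ∧
      τ 0 = a ∧ τ (dist (q a) (q b)) = b ∧
      ∀ s ∈ Icc 0 (dist (q a) (q b)), dist (q (τ s)) (α' s) ≤ C := by
  have hσ := (hα'.isQuasiGeodesicOn le_rfl le_rfl).comp hP.isQIEmbedding_inv hP.one_le le_rfl
  rw [mul_one, mul_zero, zero_add] at hσ
  obtain ⟨τ, hτ, hτ0, hτℓ, hτσ⟩ := hσ.exists_update_endpoints (ε := 2 * (K * C)) hpos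
    (by have := hP.one_le; have := hP.nonneg; positivity)
    (by rw [hα'.2.1]; exact hP.dist_inv_apply a) (by rw [hα'.2.2]; exact hP.dist_inv_apply b)
  refine ⟨τ, by convert hτ using 1; ring, hτ0, hτℓ, fun s hs => ?_⟩
  rcases hs.1.eq_or_lt with rfl | hs₀
  · rw [hτ0, hα'.2.1, dist_self]; exact hP.nonneg
  rcases hs.2.eq_or_lt with rfl | hsℓ
  · rw [hτℓ, hα'.2.2, dist_self]; exact hP.nonneg
  rw [hτσ s ⟨hs₀, hsℓ⟩, dist_comm]
  exact hP.dist_apply_inv (α' s)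

theorem exists_near_image (hP : IsQuasiInverse K C q q') (hN : IsMorseGauge N)
    {e w : X} {α : ℝ → X} {α' : ℝ → Y}
    (hα : IsMorseGeodesicFromTo N α e w) (hα' : IsGeodesicFromTo α' (q e) (q w)) :
    ∀ u ∈ Icc 0 (dist (q e) (q w)), ∃ t ∈ Icc 0 (dist e w),
      dist (α' u) (q (α t)) ≤ qiHausdorffConst N K C := by
  have hK := hP.one_le
  have hC := hP.nonneg
  have hH := qiHausdorffConst_nonneg hN hK hC
  intro u hu
  rcases (dist_nonneg (x := q e) (y := q w)).eq_or_lt with hℓ | hℓ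
  · refine ⟨0, left_mem_Icc.2 dist_nonneg, ?_⟩
    rw [show u = 0 by linarith [hu.1, hu.2], hα'.2.1, hα.1.2.1, dist_self]
    exact hH
  obtain ⟨τ, hτ, hτ0, hτℓ, hqτ⟩ := hP.exists_pullback hα' hℓ
  obtain ⟨t, ht, hτt⟩ := hα.exists_near hK (by positivity) hℓ.le hτ
    (by rw [hτ0]; exact hα.1.left_mem_image) (by rw [hτℓ]; exact hα.1.right_mem_image) u hu
  refine ⟨t, ht, ?_⟩
  have hN₀ := hN K (7 * (K * C)) hK (by positivity)
  have := (hP.isQIEmbedding (τ u) (α t)).2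
  have := hqτ u hu
  have := mul_le_mul_of_nonneg_left hτt (by linarith : 0 ≤ K)
  have : 0 ≤ K * (K + 7 * (K * C) + N K (7 * (K * C))) := by positivity
  unfold qiHausdorffConst
  nlinarith [dist_triangle (α' u) (q (τ u)) (q (α t)), dist_comm (α' u) (q (τ u))]

theorem exists_near_geodesic (hP : IsQuasiInverse K C q q') (hN : IsMorseGauge N)
    {e w : X} {α : ℝ → X} {α' : ℝ → Y}
    (hα : IsMorseGeodesicFromTo N α e w) (hα' : IsGeodesicFromTo α' (q e) (q w)) :
    ∀ t ∈ Icc 0 (dist e w), ∃ u ∈ Icc 0 (dist (q e) (q w)),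
      dist (q (α t)) (α' u) ≤ qiHausdorffConst N K C := by
  have hK := hP.one_le
  have hC := hP.nonneg
  have hN₀ := hN K (7 * (K * C)) hK (by positivity)
  intro t ht
  rcases (dist_nonneg (x := q e) (y := q w)).eq_or_lt with hℓ | hℓ
  · refine ⟨0, left_mem_Icc.2 dist_nonneg, ?_⟩
    have hew := (hP.isQIEmbedding e w).1
    rw [← hℓ, div_sub' (by positivity), div_le_iff₀ (by positivity)] at hew
    have := (hP.isQIEmbedding (α t) e).2
    rw [hα'.2.1, dist_comm (α t), hα.1.dist_left ht] at *
    have := mul_le_mul_of_nonneg_left (ht.2.trans (by nlinarith) : t ≤ 7 * (K * C))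
      (by linarith : 0 ≤ K)
    have : 0 ≤ K * (K + 2 * N K (7 * (K * C))) := by positivity
    unfold qiHausdorffConst
    nlinarith
  obtain ⟨τ, hτ, hτ0, hτℓ, hqτ⟩ := hP.exists_pullback hα' hℓ
  have hnear := hα.exists_near hK (by positivity) hℓ.le hτ
    (by rw [hτ0]; exact hα.1.left_mem_image) (by rw [hτℓ]; exact hα.1.right_mem_image)
  obtain ⟨s, hs, hαs⟩ := hα.1.exists_dist_le_of_near (by positivity) hτ hℓ.le hnear ht
    (by rw [hτ0, hτℓ, dist_self, uIcc_of_le dist_nonneg]; exact ht)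
  refine ⟨s, hs, ?_⟩
  have := (hP.isQIEmbedding (α t) (τ s)).2
  have := hqτ s hs
  unfold qiHausdorffConst
  nlinarith [dist_triangle (q (α t)) (q (τ s)) (α' s)]

theorem exists_near_inv_image (hP : IsQuasiInverse K C q q') (hN : IsMorseGauge N)
    {e w : X} {α : ℝ → X} {α' : ℝ → Y}
    (hα : IsMorseGeodesicFromTo N α e w) (hα' : IsGeodesicFromTo α' (q e) (q w)) :
    ∀ u ∈ Icc 0 (dist (q e) (q w)), ∃ t ∈ Icc 0 (dist e w),
      dist (α t) (q' (α' u)) ≤ K * qiHausdorffConst N K C + 5 * (K * C) := by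
  intro u hu
  obtain ⟨t, ht, hαt⟩ := hP.exists_near_image hN hα hα' u hu
  refine ⟨t, ht, ?_⟩
  rw [dist_comm] at hαt
  have := (hP.isQIEmbedding_inv (q (α t)) (α' u)).2
  have := mul_le_mul_of_nonneg_left hαt (by linarith [hP.one_le] : 0 ≤ K)
  linarith [dist_triangle (α t) (q' (q (α t))) (q' (α' u)), hP.dist_inv_apply (α t)]

theorem isMorseGeodesicFromTo (hP : IsQuasiInverse K C q q') (hN : IsMorseGauge N)
    {e w : X} {α : ℝ → X} {α' : ℝ → Y}
    (hα : IsMorseGeodesicFromTo N α e w) (hα' : IsGeodesicFromTo α' (q e) (q w)) :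
    IsMorseGeodesicFromTo (qiMorseGauge N K C) α' (q e) (q w) := by
  have hK := hP.one_le
  have hC := hP.nonneg
  have hH := qiHausdorffConst_nonneg hN hK hC
  refine ⟨hα', fun K₂ C₂ hK₂ hC₂ a b hab σ hσ hσa hσb s hs => ?_⟩
  have hN' := isMorseGauge_qiMorseGauge hN hK hC K₂ C₂ hK₂ hC₂
  rcases hs.1.eq_or_lt with rfl | has
  · exact ⟨_, hσa, by rwa [dist_self]⟩
  rcases hs.2.eq_or_lt with rfl | hsb
  · exact ⟨_, hσb, by rwa [dist_self]⟩
  obtain ⟨u₀, hu₀, hσ₀⟩ := hσa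
  obtain ⟨u₁, hu₁, hσ₁⟩ := hσb
  obtain ⟨t₀, ht₀, h₀⟩ := hP.exists_near_inv_image hN hα hα' u₀ hu₀
  obtain ⟨t₁, ht₁, h₁⟩ := hP.exists_near_inv_image hN hα hα' u₁ hu₁
  obtain ⟨τ, hτ, hτa, hτb, hτσ⟩ := (hσ.comp hP.isQIEmbedding_inv hK hC₂).exists_update_endpoints
    (ε := K * qiHausdorffConst N K C + 5 * (K * C)) (has.trans hsb) (by positivity)
    (by rwa [← hσ₀]) (by rwa [← hσ₁])
  obtain ⟨t, ht, hτt⟩ := hα.exists_near (by nlinarith) (by positivity) hab hτ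
    (by rw [hτa]; exact mem_image_of_mem _ ht₀) (by rw [hτb]; exact mem_image_of_mem _ ht₁) s hs
  rw [hτσ s ⟨has, hsb⟩] at hτt
  obtain ⟨u, hu, hαu⟩ := hP.exists_near_geodesic hN hα hα' t ht
  refine ⟨α' u, mem_image_of_mem _ hu, ?_⟩
  have := (hP.isQIEmbedding (q' (σ s)) (α t)).2
  have := mul_le_mul_of_nonneg_left hτt (by linarith : 0 ≤ K)
  unfold qiMorseGauge
  linarith [dist_triangle4 (σ s) (q (q' (σ s))) (q (α t)) (α' u), hP.dist_apply_inv (σ s)]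

theorem exists_near_gprod_image (hP : IsQuasiInverse K C q q') (hN : IsMorseGauge N)
    (hX : GeodesicSpace X) {e x y : X} {γ β : ℝ → X} {η' : ℝ → Y}
    (hγ : IsMorseGeodesicFromTo N γ e x) (hβ : IsMorseGeodesicFromTo N β e y)
    (hη' : IsGeodesicFromTo η' (q x) (q y)) :
    ∃ c ∈ Icc 0 (dist (q x) (q y)),
      dist (q (γ (gprod e x y))) (η' c) ≤ K * morseBranchConst N K (7 * (K * C)) + 2 * C := by
  have hK := hP.one_le
  have hC := hP.nonneg
  have hW : 7 * (K * C) ≤ morseBranchConst N K (7 * (K * C)) := by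
    have := hN (4 * K) (7 * (K * C) + 1) (by linarith) (by positivity)
    unfold morseBranchConst
    linarith
  have hp := gprod_mem_Icc_dist_left e x y
  rcases (dist_nonneg (x := q x) (y := q y)).eq_or_lt with hℓ | hℓ
  · refine ⟨0, left_mem_Icc.2 dist_nonneg, ?_⟩
    have hxy := (hP.isQIEmbedding x y).1
    rw [← hℓ, div_sub' (by positivity), div_le_iff₀ (by positivity)] at hxy
    have hpx : dist (γ (gprod e x y)) x ≤ dist x y := by
      rw [hγ.1.dist_right hp]
      unfold gprod
      linarith [dist_triangle e y x, dist_comm x y]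
    have := (hP.isQIEmbedding (γ (gprod e x y)) x).2
    have := mul_le_mul_of_nonneg_left ((hpx.trans (by nlinarith)).trans hW) (by linarith : 0 ≤ K)
    rw [hη'.2.1]
    linarith
  obtain ⟨τ, hτ, hτ0, hτℓ, hqτ⟩ := hP.exists_pullback hη' hℓ
  obtain ⟨c, hc, hγc⟩ := hγ.exists_near_gprod hX hβ hK (by positivity) hℓ.le hτ hτ0 hτℓ
  refine ⟨c, hc, ?_⟩
  have := (hP.isQIEmbedding (γ (gprod e x y)) (τ c)).2
  have := mul_le_mul_of_nonneg_left hγc (by linarith : 0 ≤ K)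
  linarith [dist_triangle (q (γ (gprod e x y))) (q (τ c)) (η' c), hqτ c hc]

theorem gprod_le_add_of_dist_le (hP : IsQuasiInverse K C q q') (hN : IsMorseGauge N)
    (hX : GeodesicSpace X) (hY : GeodesicSpace Y) {e x y : X} {γ β : ℝ → X} {γ' : ℝ → Y}
    (hγ : IsMorseGeodesicFromTo N γ e x) (hβ : IsMorseGeodesicFromTo N β e y)
    (hγ' : IsGeodesicFromTo γ' (q e) (q x)) {u D : ℝ} (hu : u ∈ Icc 0 (dist (q e) (q x)))
    (hγu : dist (q (γ (gprod e x y))) (γ' u) ≤ D) :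
    gprod (q e) (q x) (q y) ≤ u + D + (K * morseBranchConst N K (7 * (K * C)) + 2 * C) := by
  obtain ⟨η', hη'⟩ := hY (q x) (q y)
  obtain ⟨c, hc, hηc⟩ := hP.exists_near_gprod_image hN hX hγ hβ hη'
  linarith [hη'.gprod_le_dist (q e) hc, hγ'.dist_left hu, dist_comm (γ' u) (q (γ (gprod e x y))),
    dist_triangle4 (q e) (γ' u) (q (γ (gprod e x y))) (η' c)]

theorem le_gprod_add_of_dist_le (hP : IsQuasiInverse K C q q') (hN : IsMorseGauge N)
    (hX : GeodesicSpace X) (hY : GeodesicSpace Y) {e x y : X} {γ β : ℝ → X} {γ' : ℝ → Y}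
    (hγ : IsMorseGeodesicFromTo N γ e x) (hβ : IsMorseGeodesicFromTo N β e y)
    (hγ' : IsGeodesicFromTo γ' (q e) (q x)) {u D : ℝ} (hu : u ∈ Icc 0 (dist (q e) (q x)))
    (hγu : dist (q (γ (gprod e x y))) (γ' u) ≤ D) :
    u ≤ gprod (q e) (q x) (q y) + (D + qiHausdorffConst N K C + K * (6 * N 4 1) + C) := by
  obtain ⟨β', hβ'⟩ := hY (q e) (q y)
  obtain ⟨v, hv, hβv⟩ := hP.exists_near_geodesic hN hβ hβ' _ (gprod_mem_Icc_dist_right e x y)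
  have := (hP.isQIEmbedding (γ (gprod e x y)) (β (gprod e x y))).2
  have := mul_le_mul_of_nonneg_left (hγ.dist_gprod_le hX hβ) (by linarith [hP.one_le] : 0 ≤ K)
  linarith [hγ'.le_gprod_add_dist hβ' hu hv, dist_comm (γ' u) (q (γ (gprod e x y))),
    dist_triangle4 (γ' u) (q (γ (gprod e x y))) (q (β (gprod e x y))) (β' v)]

theorem dist_gprod_le (hP : IsQuasiInverse K C q q') (hN : IsMorseGauge N)
    (hX : GeodesicSpace X) (hY : GeodesicSpace Y) {e x y : X} {γ β : ℝ → X} {γ' : ℝ → Y}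
    (hγ : IsMorseGeodesicFromTo N γ e x) (hβ : IsMorseGeodesicFromTo N β e y)
    (hγ' : IsGeodesicFromTo γ' (q e) (q x)) :
    dist (q (γ (gprod e x y))) (γ' (gprod (q e) (q x) (q y))) ≤ qiGprodConst N K C := by
  have hK := hP.one_le
  have hp' := gprod_mem_Icc_dist_left (q e) (q x) (q y)
  obtain ⟨u, hu, hγu⟩ := hP.exists_near_geodesic hN hγ hγ' _ (gprod_mem_Icc_dist_left e x y)
  have hupper := hP.gprod_le_add_of_dist_le hN hX hY hγ hβ hγ' hu hγu
  have hlower := hP.le_gprod_add_of_dist_le hN hX hY hγ hβ hγ' hu hγu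
  have := dist_triangle (q (γ (gprod e x y))) (γ' u) (γ' (gprod (q e) (q x) (q y)))
  rw [hγ'.dist_eq hu hp'] at this
  have hH := qiHausdorffConst_nonneg hN hK hP.nonneg
  have hKν : 0 ≤ K * (6 * N 4 1) := by
    have := hN 4 1 (by norm_num) zero_le_one
    positivity
  have hKW : 0 ≤ K * morseBranchConst N K (7 * (K * C)) := by
    have := hP.nonneg
    have := hN (4 * K) (7 * (K * C) + 1) (by linarith) (by positivity)
    unfold morseBranchConst
    positivity
  have habs : |u - gprod (q e) (q x) (q y)| ≤ 2 * qiHausdorffConst N K C +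
      K * morseBranchConst N K (7 * (K * C)) + K * (6 * N 4 1) + 2 * C := by
    rw [abs_le']
    constructor <;> linarith [hP.nonneg]
  unfold qiGprodConst
  rw [mul_add]
  linarith

end IsQuasiInverse

end QuasiInverse

/-- quasi-isometries quasi-preserve differences of Gromov products
between points of a stratum, with constants depending only on `N, K, C`. -/
theorem statement17 (N : ℝ → ℝ → ℝ) (hN : IsMorseGauge N)
    (K C : ℝ) (hK : 1 ≤ K) (hC : 0 ≤ C) :
    ∃ A : ℝ, ∃ N' : ℝ → ℝ → ℝ, IsMorseGauge N' ∧
      ∀ (X Y : Type*) [MetricSpace X] [MetricSpace Y],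
        GeodesicSpace X → GeodesicSpace Y →
        ∀ q : X → Y, IsQuasiIsometry K C q → ∀ e : X,
          ∀ x ∈ morseStratum N e, ∀ y ∈ morseStratum N e,
            ∀ z ∈ morseStratum N e,
            q x ∈ morseStratum N' (q e) ∧ q y ∈ morseStratum N' (q e) ∧
            q z ∈ morseStratum N' (q e) ∧
            |gprod e x y - gprod e x z| / K - A ≤
              |gprod (q e) (q x) (q y) - gprod (q e) (q x) (q z)| ∧
            |gprod (q e) (q x) (q y) - gprod (q e) (q x) (q z)| ≤
              K * |gprod e x y - gprod e x z| + A := by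
  refine ⟨C + 2 * qiGprodConst N K C, qiMorseGauge N K C, isMorseGauge_qiMorseGauge hN hK hC, ?_⟩
  intro X Y _ _ hX hY q hq e x ⟨γ, hγ⟩ y ⟨β, hβ⟩ z ⟨δ, hδ⟩
  obtain ⟨q', hP⟩ := hq.exists_isQuasiInverse hK hC
  obtain ⟨γ', hγ'⟩ := hY (q e) (q x)
  obtain ⟨β', hβ'⟩ := hY (q e) (q y)
  obtain ⟨δ', hδ'⟩ := hY (q e) (q z)
  refine ⟨⟨γ', hP.isMorseGeodesicFromTo hN hγ hγ'⟩, ⟨β', hP.isMorseGeodesicFromTo hN hβ hβ'⟩,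
    ⟨δ', hP.isMorseGeodesicFromTo hN hδ hδ'⟩, ?_⟩
  have hy := hP.dist_gprod_le hN hX hY hγ hβ hγ'
  have hz := hP.dist_gprod_le hN hX hY hγ hδ hγ'
  have hY' := hγ'.dist_eq (gprod_mem_Icc_dist_left (q e) (q x) (q y))
    (gprod_mem_Icc_dist_left (q e) (q x) (q z))
  obtain ⟨hlow, hup⟩ := hq.1 (γ (gprod e x y)) (γ (gprod e x z))
  rw [hγ.1.dist_eq (gprod_mem_Icc_dist_left e x y) (gprod_mem_Icc_dist_left e x z)] at hlow hup
  constructor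
  · linarith [dist_triangle4 (q (γ (gprod e x y))) (γ' (gprod (q e) (q x) (q y)))
      (γ' (gprod (q e) (q x) (q z))) (q (γ (gprod e x z))),
      dist_comm (q (γ (gprod e x z))) (γ' (gprod (q e) (q x) (q z)))]
  · linarith [dist_triangle4 (γ' (gprod (q e) (q x) (q y))) (q (γ (gprod e x y)))
      (q (γ (gprod e x z))) (γ' (gprod (q e) (q x) (q z))),
      dist_comm (q (γ (gprod e x y))) (γ' (gprod (q e) (q x) (q y)))]
end
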